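/- Let A be a continuous matrix-valued function and b a continuous vector-valued function on an interval I containing t₀, and let x₀ ∈ ℝ^d. Then the function x(t) = Φ_A(t; t₀) · (x₀ + ∫_{t₀}^t Φ_A(t₀; τ) · b(τ) dτ), with Φ_A given by the Peano–Baker series, is differentiable on I and satisfies the inhomogeneous Cauchy problem x'(t) = A(t) · x(t) + b(t) for all t ∈ I, with x(t₀) = x₀. -/

import Mathlib

/-!
The iterates satisfy `‖I_n(t; s)‖ ≤ (C |t - s|)^n / n!`, where `C` bounds `d ‖A‖` on `[s, t]`
(the factor `d` because the entrywise sup norm is not submultiplicative). Hence the Peano–Baker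
series converges locally uniformly, may be integrated term by term, and
`Φ_A(t; s) = 1 + ∫_s^t A(τ) Φ_A(τ; s) dτ`: it solves `X' = A X`, `X(s) = 1`. Grönwall uniqueness
for this equation makes `Φ_A(t; s)` and `Φ_A(s; t)` mutually inverse, so `τ ↦ Φ_A(t₀; τ)` is
continuous, and the product rule gives `x' = A x + Φ_A(t; t₀) Φ_A(t₀; t) b = A x + b`.
-/

attribute [local instance] Matrix.normedAddCommGroup Matrix.normedSpace

open Matrix

/-- The iterated Peano–Baker integrals with base point `t₀`: `pbIter A t₀ 0 = 1` (identity
matrix) and `pbIter A t₀ (n+1) t = ∫_{t₀}^t A τ * pbIter A t₀ n τ dτ`. -/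
noncomputable def pbIter {d : ℕ} (A : ℝ → Matrix (Fin d) (Fin d) ℝ) (t₀ : ℝ) :
    ℕ → ℝ → Matrix (Fin d) (Fin d) ℝ
  | 0 => fun _ => 1
  | n + 1 => fun t => ∫ τ in t₀..t, A τ * pbIter A t₀ n τ

open Set Filter Topology MeasureTheory

namespace Set.OrdConnected

variable {I : Set ℝ} {s t : ℝ}

theorem exists_Icc_mem_nhdsWithin (hI : I.OrdConnected) (hs : s ∈ I) (ht : t ∈ I) :
    ∃ a b, s ∈ Icc a b ∧ t ∈ Icc a b ∧ Icc a b ⊆ I ∧ Icc a b ∈ 𝓝[I] t := by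
  have left : ∃ a ∈ I, a ≤ s ∧ a ≤ t ∧ Icc a t ∈ 𝓝[I ∩ Iic t] t := by
    by_cases h : ∃ a ∈ I, a < t
    · obtain ⟨a, ha, hat⟩ := h
      have hat' : min a s < t := (min_le_left a s).trans_lt hat
      exact ⟨min a s, min_rec' (· ∈ I) ha hs, min_le_right a s, hat'.le,
        nhdsWithin_mono _ inter_subset_right (Icc_mem_nhdsLE hat')⟩
    · push Not at h
      exact ⟨t, ht, h s hs, le_rfl,
        mem_of_superset self_mem_nhdsWithin fun u hu => ⟨h u hu.1, hu.2⟩⟩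
  have right : ∃ b ∈ I, s ≤ b ∧ t ≤ b ∧ Icc t b ∈ 𝓝[I ∩ Ici t] t := by
    by_cases h : ∃ b ∈ I, t < b
    · obtain ⟨b, hb, htb⟩ := h
      have htb' : t < max b s := htb.trans_le (le_max_left b s)
      exact ⟨max b s, max_rec' (· ∈ I) hb hs, le_max_right b s, htb'.le,
        nhdsWithin_mono _ inter_subset_right (Icc_mem_nhdsGE htb')⟩
    · push Not at h
      exact ⟨t, ht, h s hs, le_rfl,
        mem_of_superset self_mem_nhdsWithin fun u hu => ⟨hu.2, h u hu.1⟩⟩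
  obtain ⟨a, ha, has, hat, hleft⟩ := left
  obtain ⟨b, hb, hsb, htb, hright⟩ := right
  refine ⟨a, b, ⟨has, hsb⟩, ⟨hat, htb⟩, hI.out ha hb, ?_⟩
  rw [← inter_univ I, ← Iic_union_Ici (a := t), inter_union_distrib_left, nhdsWithin_union]
  exact mem_sup.2 ⟨mem_of_superset hleft (Icc_subset_Icc_right htb),
    mem_of_superset hright (Icc_subset_Icc_left hat)⟩

variable {E : Type*} [NormedAddCommGroup E] [NormedSpace ℝ E]

theorem hasDerivWithinAt_integral [CompleteSpace E] {f : ℝ → E} (hI : I.OrdConnected)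
    (hf : ContinuousOn f I) (hs : s ∈ I) (ht : t ∈ I) :
    HasDerivWithinAt (fun u => ∫ τ in s..u, f τ) (f t) I t := by
  obtain ⟨a, b, -, htJ, hJI, hJ⟩ := hI.exists_Icc_mem_nhdsWithin hs ht
  have : Fact (t ∈ Icc a b) := ⟨htJ⟩
  exact (intervalIntegral.integral_hasDerivWithinAt_right
    (hf.mono (hI.uIcc_subset hs ht)).intervalIntegrable
    ((hf.mono hJI).stronglyMeasurableAtFilter_nhdsWithin measurableSet_Icc t)
    ((hf t ht).mono hJI)).mono_of_mem_nhdsWithin hJ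

theorem eq_zero_of_hasDerivWithinAt_of_norm_le_mul {y y' : ℝ → E} {k : ℝ → ℝ}
    (hI : I.OrdConnected) (hk : ContinuousOn k I) (hy : ∀ u ∈ I, HasDerivWithinAt y (y' u) I u)
    (hbound : ∀ u ∈ I, ‖y' u‖ ≤ k u * ‖y u‖) (hs : s ∈ I) (ht : t ∈ I) (hst : s ≤ t)
    (hys : y s = 0) : y t = 0 := by
  have hJI : Icc s t ⊆ I := hI.out hs ht
  obtain ⟨K, hK⟩ := isCompact_Icc.exists_bound_of_continuousOn (hk.mono hJI)
  refine eq_zero_of_abs_deriv_le_mul_abs_self_of_eq_zero_right (f' := y') (K := K)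
    (fun u hu => (hy u (hJI hu)).continuousWithinAt.mono hJI) (fun u hu => ?_) hys
    (fun u hu => ?_) t ⟨hst, le_rfl⟩
  · have hu' := hJI (Ico_subset_Icc_self hu)
    exact (hy u hu').mono_of_mem_nhdsWithin (hI.mem_nhdsGE hu' ht hu.2)
  · have hkK : k u ≤ K := (Real.le_norm_self _).trans (hK u (Ico_subset_Icc_self hu))
    exact (hbound u (hJI (Ico_subset_Icc_self hu))).trans
      (mul_le_mul_of_nonneg_right hkK (norm_nonneg _))

end Set.OrdConnected

namespace Matrix

variable {l m n α : Type*} [Fintype m]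

theorem norm_mul_le_card_mul [Fintype l] [Fintype n] [NormedRing α] (M : Matrix l m α)
    (N : Matrix m n α) : ‖M * N‖ ≤ Fintype.card m * ‖M‖ * ‖N‖ := by
  rw [norm_le_iff (by positivity)]
  intro i j
  calc ‖(M * N) i j‖ ≤ ∑ k, ‖M i k‖ * ‖N k j‖ :=
        (norm_sum_le _ _).trans (Finset.sum_le_sum fun k _ => norm_mul_le _ _)
    _ ≤ ∑ _k : m, ‖M‖ * ‖N‖ := Finset.sum_le_sum fun k _ =>
        mul_le_mul (norm_entry_le_entrywise_sup_norm M) (norm_entry_le_entrywise_sup_norm N)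
          (norm_nonneg _) (norm_nonneg _)
    _ = Fintype.card m * ‖M‖ * ‖N‖ := by simp [mul_assoc]

theorem norm_one_le [DecidableEq m] [NormedRing α] [NormOneClass α] :
    ‖(1 : Matrix m m α)‖ ≤ 1 :=
  (norm_diagonal _).trans_le ((pi_norm_le_iff_of_nonneg zero_le_one).2 fun _ => norm_one.le)

variable {M : ℝ → Matrix l m ℝ} {M' : Matrix l m ℝ} {s : Set ℝ} {t : ℝ}

theorem _root_.HasDerivWithinAt.matrix_mulVec {v : ℝ → m → ℝ} {v' : m → ℝ}
    (hM : HasDerivWithinAt M M' s t) (hv : HasDerivWithinAt v v' s t) :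
    HasDerivWithinAt (fun u => M u *ᵥ v u) (M' *ᵥ v t + M t *ᵥ v') s t := by
  refine hasDerivWithinAt_pi.2 fun i => ?_
  simp only [mulVec, dotProduct, Pi.add_apply, ← Finset.sum_add_distrib]
  exact HasDerivWithinAt.fun_sum fun j _ =>
    (hasDerivWithinAt_pi.1 (hasDerivWithinAt_pi.1 hM i) j).fun_mul (hasDerivWithinAt_pi.1 hv j)

theorem _root_.HasDerivWithinAt.matrix_mul [Fintype n] {N : ℝ → Matrix m n ℝ}
    {N' : Matrix m n ℝ}
    (hM : HasDerivWithinAt M M' s t) (hN : HasDerivWithinAt N N' s t) :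
    HasDerivWithinAt (fun u => M u * N u) (M' * N t + M t * N') s t := by
  have entry : ∀ i j, HasDerivWithinAt (fun u => (M u * N u) i j)
      ((M' * N t + M t * N') i j) s t := by
    intro i j
    simp only [mul_apply, Matrix.add_apply, ← Finset.sum_add_distrib]
    exact HasDerivWithinAt.fun_sum fun k _ =>
      (hasDerivWithinAt_pi.1 (hasDerivWithinAt_pi.1 hM i) k).fun_mul
        (hasDerivWithinAt_pi.1 (hasDerivWithinAt_pi.1 hN k) j)
  exact (hasDerivWithinAt_pi (φ := fun u i j => (M u * N u) i j)).2 fun i =>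
    hasDerivWithinAt_pi.2 (entry i)

end Matrix

section PeanoBaker

open scoped Nat Interval

variable {d : ℕ} {A : ℝ → Matrix (Fin d) (Fin d) ℝ} {I : Set ℝ} {s t : ℝ}

theorem norm_pbIter_le {C : ℝ} (hC : ∀ τ ∈ uIcc s t, d * ‖A τ‖ ≤ C) (n : ℕ) :
    ‖pbIter A s n t‖ ≤ (C * |t - s|) ^ n / n ! := by
  induction n generalizing t with
  | zero => simpa [pbIter] using norm_one_le
  | succ n ih =>
    have hC0 : 0 ≤ C := (by positivity : (0 : ℝ) ≤ d * ‖A s‖).trans (hC s left_mem_uIcc)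
    have hterm : ∀ τ ∈ Ι s t, ‖A τ * pbIter A s n τ‖ ≤ C ^ (n + 1) / n ! * |τ - s| ^ n := by
      intro τ hτ
      have hτ' := uIoc_subset_uIcc hτ
      calc ‖A τ * pbIter A s n τ‖ ≤ d * ‖A τ‖ * ‖pbIter A s n τ‖ := by
            simpa using norm_mul_le_card_mul (A τ) (pbIter A s n τ)
        _ ≤ C * ((C * |τ - s|) ^ n / n !) :=
            mul_le_mul (hC τ hτ') (ih fun σ hσ => hC σ (uIcc_subset_uIcc left_mem_uIcc hτ' hσ))
              (norm_nonneg _) hC0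
        _ = C ^ (n + 1) / n ! * |τ - s| ^ n := by ring
    calc ‖pbIter A s (n + 1) t‖ ≤ ∫ τ in Ι s t, C ^ (n + 1) / n ! * |τ - s| ^ n := by
          rw [pbIter, intervalIntegral.norm_intervalIntegral_eq]
          exact norm_integral_le_of_norm_le (Continuous.integrableOn_uIoc (by fun_prop))
            ((ae_restrict_mem measurableSet_uIoc).mono hterm)
      _ = (C * |t - s|) ^ (n + 1) / (n + 1)! := by
          rw [integral_const_mul, integral_pow_abs_sub_uIoc, Nat.factorial_succ]
          push_cast
          field_simp
          ring

theorem exists_norm_pbIter_le {a b : ℝ} (hA : ContinuousOn A (Icc a b)) (hs : s ∈ Icc a b) :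
    ∃ K C : ℝ, (∀ τ ∈ Icc a b, d * ‖A τ‖ ≤ K) ∧
      ∀ n, ∀ t ∈ Icc a b, ‖pbIter A s n t‖ ≤ C ^ n / n ! := by
  obtain ⟨K, hK⟩ := isCompact_Icc.exists_bound_of_continuousOn hA
  have hK0 : 0 ≤ K := (norm_nonneg _).trans (hK s hs)
  refine ⟨d * K, d * K * (b - a), fun τ hτ => by gcongr; exact hK τ hτ, fun n t ht => ?_⟩
  refine (norm_pbIter_le (C := d * K) (fun τ hτ => ?_) n).trans ?_
  · gcongr
    exact hK τ (uIcc_subset_Icc hs ht hτ)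
  · have : |t - s| ≤ b - a :=
      abs_sub_le_iff.2 ⟨by linarith [ht.2, hs.1], by linarith [ht.1, hs.2]⟩
    gcongr

theorem continuousOn_pbIter (hI : I.OrdConnected) (hA : ContinuousOn A I) (hs : s ∈ I) (n : ℕ) :
    ContinuousOn (pbIter A s n) I := by
  induction n with
  | zero => exact continuousOn_const
  | succ n ih =>
    exact fun t ht => (hI.hasDerivWithinAt_integral (hA.mul ih) hs ht).continuousWithinAt

/-- `peanoBaker A s t` is `Φ_A(t; s)`, the Peano–Baker series with base point `s`. -/
noncomputable def peanoBaker (A : ℝ → Matrix (Fin d) (Fin d) ℝ) (s t : ℝ) :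
    Matrix (Fin d) (Fin d) ℝ :=
  ∑' n, pbIter A s n t

theorem summable_pbIter (hA : ContinuousOn A (uIcc s t)) : Summable fun n => pbIter A s n t := by
  obtain ⟨-, C, -, hC⟩ := exists_norm_pbIter_le hA left_mem_uIcc
  exact .of_norm_bounded (Real.summable_pow_div_factorial C) fun n => hC n t right_mem_uIcc

theorem peanoBaker_self (A : ℝ → Matrix (Fin d) (Fin d) ℝ) (s : ℝ) : peanoBaker A s s = 1 := by
  rw [peanoBaker, tsum_eq_single 0 fun n hn => ?_]
  · rfl
  · obtain ⟨n, rfl⟩ := Nat.exists_eq_succ_of_ne_zero hn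
    exact intervalIntegral.integral_same

theorem peanoBaker_eq_one_add_integral (hI : I.OrdConnected) (hA : ContinuousOn A I)
    (hs : s ∈ I) (ht : t ∈ I) :
    peanoBaker A s t = 1 + ∫ τ in s..t, A τ * peanoBaker A s τ := by
  have hJI : uIcc s t ⊆ I := hI.uIcc_subset hs ht
  obtain ⟨K, C, hK, hC⟩ := exists_norm_pbIter_le (hA.mono hJI) left_mem_uIcc
  have hsum : HasSum (fun n => ∫ τ in s..t, A τ * pbIter A s n τ)
      (∫ τ in s..t, A τ * peanoBaker A s τ) := by
    refine intervalIntegral.hasSum_integral_of_dominated_convergence (fun n _ => K * (C ^ n / n !))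
      (fun n => ?_) (fun n => ?_) ?_ intervalIntegrable_const ?_
    · exact ((hA.mul (continuousOn_pbIter hI hA hs n)).mono hJI).intervalIntegrable.def'
        |>.aestronglyMeasurable
    · refine .of_forall fun τ hτ => ?_
      have hτ' := uIoc_subset_uIcc hτ
      calc ‖A τ * pbIter A s n τ‖ ≤ d * ‖A τ‖ * ‖pbIter A s n τ‖ := by
            simpa using norm_mul_le_card_mul (A τ) (pbIter A s n τ)
        _ ≤ K * (C ^ n / n !) :=
            mul_le_mul (hK τ hτ') (hC n τ hτ') (norm_nonneg _)
              ((by positivity : (0 : ℝ) ≤ d * ‖A τ‖).trans (hK τ hτ'))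
    · exact .of_forall fun τ _ => (Real.summable_pow_div_factorial C).mul_left K
    · refine .of_forall fun τ hτ => ?_
      have hτI := hJI (uIoc_subset_uIcc hτ)
      exact (summable_pbIter (hA.mono (hI.uIcc_subset hs hτI))).hasSum.mul_left (A τ)
  rw [peanoBaker, (summable_pbIter (hA.mono hJI)).tsum_eq_zero_add]
  exact congrArg (1 + ·) hsum.tsum_eq

theorem continuousOn_peanoBaker (hI : I.OrdConnected) (hA : ContinuousOn A I) (hs : s ∈ I) :
    ContinuousOn (peanoBaker A s) I := by
  intro t ht
  obtain ⟨a, b, hsJ, htJ, hJI, hJ⟩ := hI.exists_Icc_mem_nhdsWithin hs ht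
  obtain ⟨-, C, -, hC⟩ := exists_norm_pbIter_le (hA.mono hJI) hsJ
  have hcont : ContinuousOn (peanoBaker A s) (Icc a b) :=
    continuousOn_tsum (fun n => (continuousOn_pbIter hI hA hs n).mono hJI)
      (Real.summable_pow_div_factorial C) hC
  exact (hcont t htJ).mono_of_mem_nhdsWithin hJ

theorem hasDerivWithinAt_peanoBaker (hI : I.OrdConnected) (hA : ContinuousOn A I) (hs : s ∈ I)
    (ht : t ∈ I) : HasDerivWithinAt (peanoBaker A s) (A t * peanoBaker A s t) I t :=
  ((hI.hasDerivWithinAt_integral (hA.mul (continuousOn_peanoBaker hI hA hs)) hs ht).const_add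
    1).congr_of_mem (fun _ hu => peanoBaker_eq_one_add_integral hI hA hs hu) ht

theorem peanoBaker_mul_peanoBaker_of_le (hI : I.OrdConnected) (hA : ContinuousOn A I)
    (hs : s ∈ I) (ht : t ∈ I) (hst : s ≤ t) : peanoBaker A s t * peanoBaker A t s = 1 := by
  set y := fun u => peanoBaker A s u * peanoBaker A t s - peanoBaker A t u
  have hy : ∀ u ∈ I, HasDerivWithinAt y (A u * y u) I u := by
    intro u hu
    refine (((hasDerivWithinAt_peanoBaker hI hA hs hu).matrix_mul
      (hasDerivWithinAt_const u I (peanoBaker A t s))).sub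
      (hasDerivWithinAt_peanoBaker hI hA ht hu)).congr_deriv ?_
    simp only [y, Matrix.mul_zero, add_zero, Matrix.mul_sub, Matrix.mul_assoc]
  have hyt : y t = 0 :=
    hI.eq_zero_of_hasDerivWithinAt_of_norm_le_mul (continuousOn_const.mul hA.norm) hy
      (fun u _ => by simpa using norm_mul_le_card_mul (A u) (y u)) hs ht hst
      (by simp [y, peanoBaker_self])
  rwa [sub_eq_zero, peanoBaker_self] at hyt

theorem peanoBaker_mul_peanoBaker (hI : I.OrdConnected) (hA : ContinuousOn A I) (hs : s ∈ I)
    (ht : t ∈ I) : peanoBaker A s t * peanoBaker A t s = 1 := by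
  -- Grönwall is only needed forward in time: a one-sided inverse of a square matrix is two-sided.
  rcases le_total s t with hst | hts
  · exact peanoBaker_mul_peanoBaker_of_le hI hA hs ht hst
  · exact mul_eq_one_comm.1 (peanoBaker_mul_peanoBaker_of_le hI hA ht hs hts)

theorem continuousOn_peanoBaker_base (hI : I.OrdConnected) (hA : ContinuousOn A I) (ht : t ∈ I) :
    ContinuousOn (fun s => peanoBaker A s t) I := by
  refine ContinuousOn.congr (f := fun s => (peanoBaker A t s)⁻¹) (fun s hs => ?_)
    fun s hs => (Matrix.inv_eq_left_inv (peanoBaker_mul_peanoBaker hI hA hs ht)).symm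
  have hdet := det_ne_zero_of_left_inverse (peanoBaker_mul_peanoBaker hI hA hs ht)
  refine (continuousAt_matrix_inv _ ?_).comp_continuousWithinAt
    (continuousOn_peanoBaker hI hA ht s hs)
  rw [Ring.inverse_eq_inv']
  exact continuousAt_inv₀ hdet

end PeanoBaker

theorem stmt14_general {d : ℕ} (A : ℝ → Matrix (Fin d) (Fin d) ℝ)
    (b : ℝ → Fin d → ℝ) (I : Set ℝ) (hI : I.OrdConnected) (t₀ : ℝ) (ht₀ : t₀ ∈ I)
    (hA : ContinuousOn A I) (hb : ContinuousOn b I) (x₀ : Fin d → ℝ)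
    (x : ℝ → Fin d → ℝ)
    (hx : ∀ t, x t = (∑' n : ℕ, pbIter A t₀ n t) *ᵥ
        (x₀ + ∫ τ in t₀..t, (∑' n : ℕ, pbIter A τ n t₀) *ᵥ b τ)) :
    (∀ t ∈ I, HasDerivWithinAt x (A t *ᵥ x t + b t) I t) ∧ x t₀ = x₀ := by
  obtain rfl : x = fun t => peanoBaker A t₀ t *ᵥ
      (x₀ + ∫ τ in t₀..t, peanoBaker A τ t₀ *ᵥ b τ) := funext hx
  refine ⟨fun t ht => ?_, by simp [peanoBaker_self]⟩
  have hg : ContinuousOn (fun τ => peanoBaker A τ t₀ *ᵥ b τ) I :=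
    (continuous_fst.matrix_mulVec continuous_snd).comp_continuousOn
      ((continuousOn_peanoBaker_base hI hA ht₀).prodMk hb)
  convert (hasDerivWithinAt_peanoBaker hI hA ht₀ ht).matrix_mulVec
    ((hI.hasDerivWithinAt_integral hg ht₀ ht).const_add x₀) using 1
  simp only [mulVec_mulVec, peanoBaker_mul_peanoBaker hI hA ht₀ ht, one_mulVec]

theorem stmt14 {d : ℕ} (hd : 1 ≤ d) (A : ℝ → Matrix (Fin d) (Fin d) ℝ)
    (b : ℝ → Fin d → ℝ) (I : Set ℝ) (hI : I.OrdConnected) (t₀ : ℝ) (ht₀ : t₀ ∈ I)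
    (hA : ContinuousOn A I) (hb : ContinuousOn b I) (x₀ : Fin d → ℝ)
    (x : ℝ → Fin d → ℝ)
    (hx : ∀ t, x t = (∑' n : ℕ, pbIter A t₀ n t) *ᵥ
        (x₀ + ∫ τ in t₀..t, (∑' n : ℕ, pbIter A τ n t₀) *ᵥ b τ)) :
    (∀ t ∈ I, HasDerivWithinAt x (A t *ᵥ x t + b t) I t) ∧ x t₀ = x₀ :=
  stmt14_general A b I hI t₀ ht₀ hA hb x₀ x hx
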